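/- arXiv:1006.5225 — 3 statements merged into one kernel-verified Lean document; each statement's English description precedes it below -/
import Mathlib

section
/- If ψ : ℝ≥0 → ℝ≥0 is an Orlicz function (convex, ψ(0)=0, continuous at 0, ψ(x)/x → ∞) and there exist b > 1, C > 0, x₀ > 0 with ψ(x)^b ≤ ψ(Cx) for all x ≥ x₀, then for every b' > 1 there exist C' > 0 and x₁ > 0 such that ψ(x)^{b'} ≤ ψ(C'x) for all x ≥ x₁. -/
/-!
Since `ψ x / x → ∞`, eventually `ψ x ≥ 1`. Iterating `ψ(x)^b ≤ ψ(Cx)` `n` times (legitimate for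
large `x`, as `C^k x → ∞`) gives `ψ(x)^{b^n} ≤ ψ(C^n x)`, and once `b^n ≥ b'` the bound `ψ x ≥ 1`
yields `ψ(x)^{b'} ≤ ψ(x)^{b^n}`.
-/

open Filter

theorem Filter.Tendsto.atTop_of_div_id_atTop {ψ : ℝ → ℝ}
    (h : Tendsto (fun x => ψ x / x) atTop atTop) : Tendsto ψ atTop atTop := by
  refine (h.atTop_mul_atTop₀ tendsto_id).congr' ?_
  filter_upwards [eventually_ne_atTop 0] with x hx
  exact div_mul_cancel₀ (ψ x) hx

theorem eventually_rpow_pow_le_comp_pow_mul {ψ : ℝ → ℝ} {b C : ℝ}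
    (hψ : ∀ᶠ x in atTop, 0 ≤ ψ x) (hb : 0 ≤ b) (hC : 0 < C)
    (hΔ : ∀ᶠ x in atTop, ψ x ^ b ≤ ψ (C * x)) (n : ℕ) :
    ∀ᶠ x in atTop, ψ x ^ (b ^ n) ≤ ψ (C ^ n * x) := by
  induction n with
  | zero => simp
  | succ n ih =>
    have ih_C : ∀ᶠ x in atTop, ψ (C * x) ^ (b ^ n) ≤ ψ (C ^ n * (C * x)) :=
      tendsto_id.const_mul_atTop hC |>.eventually ih
    filter_upwards [hψ, hΔ, ih_C] with x hψx hΔx ih_x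
    calc ψ x ^ (b ^ (n + 1)) = (ψ x ^ b) ^ (b ^ n) := by rw [pow_succ', Real.rpow_mul hψx]
      _ ≤ ψ (C * x) ^ (b ^ n) := by gcongr
      _ ≤ ψ (C ^ (n + 1) * x) := by rwa [pow_succ, mul_assoc]

theorem exists_eventually_rpow_le_comp_mul {ψ : ℝ → ℝ} {b C : ℝ}
    (hψ : Tendsto ψ atTop atTop) (hb : 1 < b) (hC : 0 < C)
    (hΔ : ∀ᶠ x in atTop, ψ x ^ b ≤ ψ (C * x)) (b' : ℝ) :
    ∃ C' > 0, ∀ᶠ x in atTop, ψ x ^ b' ≤ ψ (C' * x) := by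
  obtain ⟨n, hn⟩ := pow_unbounded_of_one_lt b' hb
  have hψ1 := hψ.eventually_ge_atTop 1
  have hiter := eventually_rpow_pow_le_comp_pow_mul
    (hψ1.mono fun _ h => zero_le_one.trans h) (by linarith) hC hΔ n
  refine ⟨C ^ n, pow_pos hC n, ?_⟩
  filter_upwards [hψ1, hiter] with x hψx hiter_x
  exact (Real.rpow_le_rpow_of_exponent_le hψx hn.le).trans hiter_x

theorem exists_pos_forall_ge_of_eventually_atTop {p : ℝ → Prop} (h : ∀ᶠ x in atTop, p x) :
    ∃ x₁, 0 < x₁ ∧ ∀ x, x₁ ≤ x → p x := by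
  obtain ⟨x₁, hx₁, hp⟩ := ((atTop_basis' 1).eventually_iff).1 h
  exact ⟨x₁, one_pos.trans_le hx₁, fun x hx => hp hx⟩

theorem stmt_0_general (ψ : ℝ → ℝ)
    (hlim : Filter.Tendsto (fun x => ψ x / x) Filter.atTop Filter.atTop)
    (hΔ : ∃ b : ℝ, 1 < b ∧ ∃ C : ℝ, 0 < C ∧ ∃ x₀ : ℝ, 0 < x₀ ∧
      ∀ x, x₀ ≤ x → ψ x ^ b ≤ ψ (C * x)) :
    ∀ b' : ℝ, 1 < b' → ∃ C' : ℝ, 0 < C' ∧ ∃ x₁ : ℝ, 0 < x₁ ∧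
      ∀ x, x₁ ≤ x → ψ x ^ b' ≤ ψ (C' * x) := by
  obtain ⟨b, hb, C, hC, x₀, -, hΔ⟩ := hΔ
  intro b' _
  obtain ⟨C', hC', hΔ'⟩ := exists_eventually_rpow_le_comp_mul hlim.atTop_of_div_id_atTop hb hC
    (eventually_atTop.2 ⟨x₀, hΔ⟩) b'
  exact ⟨C', hC', exists_pos_forall_ge_of_eventually_atTop hΔ'⟩

/-- If an Orlicz function satisfies `ψ(x)^b ≤ ψ(Cx)` for large `x` for some `b > 1`,
then for every `b' > 1` there are `C' > 0`, `x₁ > 0` with `ψ(x)^{b'} ≤ ψ(C'x)` for `x ≥ x₁`. -/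
theorem stmt_0 (ψ : ℝ → ℝ)
    (hconv : ConvexOn ℝ (Set.Ici 0) ψ)
    (hψ0 : ψ 0 = 0)
    (hcont : ContinuousWithinAt ψ (Set.Ici 0) 0)
    (hmono : MonotoneOn ψ (Set.Ici 0))
    (hnn : ∀ x, 0 ≤ x → 0 ≤ ψ x)
    (hlim : Filter.Tendsto (fun x => ψ x / x) Filter.atTop Filter.atTop)
    (hΔ : ∃ b : ℝ, 1 < b ∧ ∃ C : ℝ, 0 < C ∧ ∃ x₀ : ℝ, 0 < x₀ ∧
      ∀ x, x₀ ≤ x → ψ x ^ b ≤ ψ (C * x)) :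
    ∀ b' : ℝ, 1 < b' → ∃ C' : ℝ, 0 < C' ∧ ∃ x₁ : ℝ, 0 < x₁ ∧
      ∀ x, x₁ ≤ x → ψ x ^ b' ≤ ψ (C' * x) :=
  stmt_0_general ψ hlim hΔ
end

section
/- If ψ : ℝ≥0 → ℝ≥0 is an Orlicz function satisfying the Δ²-Condition, then ψ satisfies the uniform ∇₀-Condition: there exist x₀ > 0 and C ≥ 1 such that for every β > 1 and all x₀ ≤ x ≤ y, ψ(βx)/ψ(x) ≤ ψ(βCy)/ψ(y). -/
/-! Once `ψ ≥ 1`, which holds eventually since `ψ x / x → ∞`, monotonicity and the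
Δ²-condition give `ψ(βx) ψ(y) ≤ ψ(βy)² ≤ ψ(Cβy) ≤ ψ(x) ψ(Cβy)` for `x ≤ y`. -/

open Filter Set

theorem eventually_one_le_of_tendsto_div_atTop {ψ : ℝ → ℝ}
    (hlim : Tendsto (fun x => ψ x / x) atTop atTop) : ∀ᶠ x in atTop, 1 ≤ ψ x := by
  filter_upwards [hlim.eventually_ge_atTop 1, eventually_ge_atTop 1] with x hψx hx
  have hψx' : 1 * x ≤ ψ x := (le_div_iff₀ (one_pos.trans_le hx)).mp hψx
  linarith

theorem sq_le_comp_max_one_mul {ψ : ℝ → ℝ} (hmono : MonotoneOn ψ (Ici 0)) {x₀ C : ℝ}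
    (hx₀ : 0 ≤ x₀) (hC : 0 < C) (hΔ : ∀ x, x₀ ≤ x → ψ x ^ 2 ≤ ψ (C * x)) :
    ∀ x, x₀ ≤ x → ψ x ^ 2 ≤ ψ (max C 1 * x) := by
  intro x hx
  have hx0 : 0 ≤ x := hx₀.trans hx
  refine (hΔ x hx).trans (hmono (mem_Ici.2 (by positivity)) (mem_Ici.2 (by positivity)) ?_)
  gcongr
  exact le_max_left C 1

theorem mul_le_mul_of_sq_le_comp {ψ : ℝ → ℝ} (hmono : MonotoneOn ψ (Ici 0)) {a C β x y : ℝ}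
    (ha : 0 ≤ a) (hone : ∀ x, a ≤ x → 1 ≤ ψ x)
    (hΔ : ∀ x, a ≤ x → ψ x ^ 2 ≤ ψ (C * x)) (hβ : 1 ≤ β) (hx : a ≤ x) (hxy : x ≤ y) :
    ψ (β * x) * ψ y ≤ ψ x * ψ (β * C * y) := by
  have hx0 : 0 ≤ x := ha.trans hx
  have hy0 : 0 ≤ y := hx0.trans hxy
  have hay : a ≤ β * y := hx.trans (hxy.trans (le_mul_of_one_le_left hy0 hβ))
  have hψβy : 1 ≤ ψ (β * y) := hone _ hay
  have hΔβy : ψ (β * y) ^ 2 ≤ ψ (β * C * y) := (hΔ _ hay).trans_eq (by ring_nf)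
  calc ψ (β * x) * ψ y ≤ ψ (β * y) * ψ (β * y) := by
        refine mul_le_mul ?_ ?_ (one_pos.trans_le (hone y (hx.trans hxy))).le (by linarith)
        · exact hmono (mem_Ici.2 (by positivity)) (mem_Ici.2 (by positivity)) (by gcongr)
        · exact hmono hy0 (mem_Ici.2 (by positivity)) (le_mul_of_one_le_left hy0 hβ)
    _ = ψ (β * y) ^ 2 := (sq _).symm
    _ ≤ ψ (β * C * y) := hΔβy
    _ ≤ ψ x * ψ (β * C * y) :=
        le_mul_of_one_le_left ((sq_nonneg _).trans hΔβy) (hone x hx)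

theorem stmt_3_general (ψ : ℝ → ℝ)
    (hmono : MonotoneOn ψ (Set.Ici 0))
    (hlim : Filter.Tendsto (fun x => ψ x / x) Filter.atTop Filter.atTop)
    (hΔ : ∃ x₀ : ℝ, 0 < x₀ ∧ ∃ C : ℝ, 0 < C ∧ ∀ x, x₀ ≤ x → (ψ x) ^ 2 ≤ ψ (C * x)) :
    ∃ x₀ : ℝ, 0 < x₀ ∧ ∃ C : ℝ, 1 ≤ C ∧ (∀ x, x₀ ≤ x → 0 < ψ x) ∧
      ∀ β : ℝ, 1 < β → ∀ x y : ℝ, x₀ ≤ x → x ≤ y →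
        ψ (β * x) * ψ y ≤ ψ x * ψ (β * C * y) := by
  obtain ⟨x₀, hx₀, C, hC, hΔC⟩ := hΔ
  obtain ⟨a, hone, hax₀⟩ := (eventually_forall_ge_atTop.2
    (eventually_one_le_of_tendsto_div_atTop hlim)).and (eventually_ge_atTop x₀) |>.exists
  have ha : 0 < a := hx₀.trans_le hax₀
  have hΔa : ∀ x, a ≤ x → ψ x ^ 2 ≤ ψ (max C 1 * x) := fun x hx =>
    sq_le_comp_max_one_mul hmono hx₀.le hC hΔC x (hax₀.trans hx)
  refine ⟨a, ha, max C 1, le_max_right C 1, fun x hx => one_pos.trans_le (hone x hx), ?_⟩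
  intro β hβ x y hx hxy
  exact mul_le_mul_of_sq_le_comp hmono ha.le hone hΔa hβ.le hx hxy

/-- An Orlicz function satisfying the Δ²-condition satisfies the uniform ∇₀-condition:
there are `x₀ > 0` and `C ≥ 1` such that for every `β > 1` and all `x₀ ≤ x ≤ y`,
`ψ(βx)·ψ(y) ≤ ψ(x)·ψ(βCy)`. -/
theorem stmt_3 (ψ : ℝ → ℝ)
    (hconv : ConvexOn ℝ (Set.Ici 0) ψ)
    (hψ0 : ψ 0 = 0)
    (hcont : ContinuousWithinAt ψ (Set.Ici 0) 0)
    (hmono : MonotoneOn ψ (Set.Ici 0))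
    (hnn : ∀ x, 0 ≤ x → 0 ≤ ψ x)
    (hlim : Filter.Tendsto (fun x => ψ x / x) Filter.atTop Filter.atTop)
    (hΔ : ∃ x₀ : ℝ, 0 < x₀ ∧ ∃ C : ℝ, 0 < C ∧ ∀ x, x₀ ≤ x → (ψ x) ^ 2 ≤ ψ (C * x)) :
    ∃ x₀ : ℝ, 0 < x₀ ∧ ∃ C : ℝ, 1 ≤ C ∧ (∀ x, x₀ ≤ x → 0 < ψ x) ∧
      ∀ β : ℝ, 1 < β → ∀ x y : ℝ, x₀ ≤ x → x ≤ y →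
        ψ (β * x) * ψ y ≤ ψ x * ψ (β * C * y) :=
  stmt_3_general ψ hmono hlim hΔ
end

section
/- The non-isotropic pseudo-distance d(z,w) = √|1-⟨z,w⟩| satisfies the triangle inequality on the closed unit ball of ℂ^N: for all z,w,u with |z|,|w|,|u| ≤ 1, d(z,w) ≤ d(z,u) + d(u,w). -/
/-!
Put `s = ⟪z,u⟫`, `t = ⟪u,w⟫` and split `1 - ⟪z,w⟫ = (1 - s t) - (⟪z,w⟫ - s t)`. The first term
is at most `|1 - s| + |1 - t|`. The second is the value at `(z, w)` of the Hermitian form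
`⟪x,y⟫ - ⟪x,u⟫⟪u,y⟫`, which for `‖u‖ ≤ 1` is the inner product of `x - ⟪u,x⟫ u` plus
`(1 - ‖u‖²)` times the product of the coordinates along `u`; Cauchy–Schwarz bounds it by
`√(1 - |s|²) √(1 - |t|²) ≤ 2 √|1 - s| √|1 - t|`. Altogether
`|1 - ⟪z,w⟫| ≤ (√|1 - s| + √|1 - t|)²`.
-/

open scoped InnerProductSpace

lemma mul_add_mul_le_sqrt_mul_sqrt (a b c d : ℝ) :
    a * c + b * d ≤ √(a ^ 2 + b ^ 2) * √(c ^ 2 + d ^ 2) := by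
  rw [← Real.sqrt_mul (by positivity)]
  refine Real.le_sqrt_of_sq_le ?_
  nlinarith [sq_nonneg (a * d - b * c)]

namespace Complex

lemma one_sub_norm_sq_le_two_mul_norm_one_sub {s : ℂ} (hs : ‖s‖ ≤ 1) :
    1 - ‖s‖ ^ 2 ≤ 2 * ‖1 - s‖ := by
  have : 1 - ‖s‖ ≤ ‖1 - s‖ := by simpa using norm_sub_norm_le (1 : ℂ) s
  nlinarith [norm_nonneg s]

lemma norm_one_sub_mul_le {s t : ℂ} (hs : ‖s‖ ≤ 1) :
    ‖1 - s * t‖ ≤ ‖1 - s‖ + ‖1 - t‖ :=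
  calc ‖1 - s * t‖ = ‖(1 - s) + s * (1 - t)‖ := by ring_nf
    _ ≤ ‖1 - s‖ + ‖s‖ * ‖1 - t‖ := by rw [← norm_mul]; exact norm_add_le _ _
    _ ≤ ‖1 - s‖ + ‖1 - t‖ := by gcongr; exact mul_le_of_le_one_left (norm_nonneg _) hs

end Complex

section

variable {E : Type*} [NormedAddCommGroup E] [InnerProductSpace ℂ E]

lemma inner_sub_inner_mul_inner_eq (z w u : E) :
    ⟪z, w⟫_ℂ - ⟪z, u⟫_ℂ * ⟪u, w⟫_ℂ =
      ⟪z - ⟪u, z⟫_ℂ • u, w - ⟪u, w⟫_ℂ • u⟫_ℂ + ((1 - ‖u‖ ^ 2 : ℝ) : ℂ) * (⟪z, u⟫_ℂ * ⟪u, w⟫_ℂ) := by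
  simp only [inner_sub_left, inner_sub_right, inner_smul_left, inner_smul_right,
    inner_conj_symm, inner_self_eq_norm_sq_to_K, RCLike.ofReal_eq_complex_ofReal]
  push_cast
  ring

lemma norm_sub_inner_smul_sq_add (z u : E) :
    ‖z - ⟪u, z⟫_ℂ • u‖ ^ 2 + (1 - ‖u‖ ^ 2) * ‖⟪z, u⟫_ℂ‖ ^ 2 = ‖z‖ ^ 2 - ‖⟪z, u⟫_ℂ‖ ^ 2 := by
  have h := inner_sub_inner_mul_inner_eq z z u
  rw [← inner_conj_symm u z, RCLike.mul_conj, inner_self_eq_norm_sq_to_K,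
    inner_self_eq_norm_sq_to_K, inner_conj_symm, RCLike.ofReal_eq_complex_ofReal] at h
  exact_mod_cast h.symm

lemma norm_inner_sub_inner_mul_inner_le {u : E} (hu : ‖u‖ ≤ 1) (z w : E) :
    ‖⟪z, w⟫_ℂ - ⟪z, u⟫_ℂ * ⟪u, w⟫_ℂ‖ ≤
      √(‖z‖ ^ 2 - ‖⟪z, u⟫_ℂ‖ ^ 2) * √(‖w‖ ^ 2 - ‖⟪u, w⟫_ℂ‖ ^ 2) := by
  set A := z - ⟪u, z⟫_ℂ • u
  set B := w - ⟪u, w⟫_ℂ • u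
  set e := √(1 - ‖u‖ ^ 2)
  have he : e ^ 2 = 1 - ‖u‖ ^ 2 := Real.sq_sqrt (by nlinarith [norm_nonneg u])
  have hA : ‖A‖ ^ 2 + (e * ‖⟪z, u⟫_ℂ‖) ^ 2 = ‖z‖ ^ 2 - ‖⟪z, u⟫_ℂ‖ ^ 2 := by
    rw [mul_pow, he]; exact norm_sub_inner_smul_sq_add z u
  have hB : ‖B‖ ^ 2 + (e * ‖⟪u, w⟫_ℂ‖) ^ 2 = ‖w‖ ^ 2 - ‖⟪u, w⟫_ℂ‖ ^ 2 := by
    rw [mul_pow, he, ← norm_inner_symm w u]; exact norm_sub_inner_smul_sq_add w u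
  rw [inner_sub_inner_mul_inner_eq, ← hA, ← hB]
  calc _ ≤ ‖⟪A, B⟫_ℂ‖ + e ^ 2 * (‖⟪z, u⟫_ℂ‖ * ‖⟪u, w⟫_ℂ‖) := by
        rw [he]
        refine (norm_add_le _ _).trans_eq ?_
        rw [norm_mul, norm_mul, Complex.norm_real,
          Real.norm_of_nonneg (by linarith [he, sq_nonneg e])]
    _ ≤ ‖A‖ * ‖B‖ + (e * ‖⟪z, u⟫_ℂ‖) * (e * ‖⟪u, w⟫_ℂ‖) := by
        nlinarith [norm_inner_le_norm (𝕜 := ℂ) A B]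
    _ ≤ _ := mul_add_mul_le_sqrt_mul_sqrt _ _ _ _

theorem sqrt_norm_one_sub_inner_le {z w u : E} (hz : ‖z‖ ≤ 1) (hw : ‖w‖ ≤ 1) (hu : ‖u‖ ≤ 1) :
    √‖1 - ⟪z, w⟫_ℂ‖ ≤ √‖1 - ⟪z, u⟫_ℂ‖ + √‖1 - ⟪u, w⟫_ℂ‖ := by
  set s := ⟪z, u⟫_ℂ
  set t := ⟪u, w⟫_ℂ
  have hs : ‖s‖ ≤ 1 := (norm_inner_le_norm z u).trans (mul_le_one₀ hz (norm_nonneg u) hu)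
  have ht : ‖t‖ ≤ 1 := (norm_inner_le_norm u w).trans (mul_le_one₀ hu (norm_nonneg w) hw)
  have hsqrt_le {x : E} (hx : ‖x‖ ≤ 1) (c : ℂ) (hc : ‖c‖ ≤ 1) :
      √(‖x‖ ^ 2 - ‖c‖ ^ 2) ≤ √2 * √‖1 - c‖ := by
    rw [← Real.sqrt_mul zero_le_two]
    refine Real.sqrt_le_sqrt ?_
    nlinarith [Complex.one_sub_norm_sq_le_two_mul_norm_one_sub hc, norm_nonneg x]
  have hform : ‖⟪z, w⟫_ℂ - s * t‖ ≤ 2 * (√‖1 - s‖ * √‖1 - t‖) :=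
    calc _ ≤ (√2 * √‖1 - s‖) * (√2 * √‖1 - t‖) :=
          (norm_inner_sub_inner_mul_inner_le hu z w).trans <|
            mul_le_mul (hsqrt_le hz s hs) (hsqrt_le hw t ht) (Real.sqrt_nonneg _) (by positivity)
      _ = _ := by rw [mul_mul_mul_comm, Real.mul_self_sqrt zero_le_two]
  rw [Real.sqrt_le_left (by positivity), add_sq, Real.sq_sqrt (norm_nonneg _),
    Real.sq_sqrt (norm_nonneg _)]
  calc ‖1 - ⟪z, w⟫_ℂ‖ ≤ ‖1 - s * t‖ + ‖⟪z, w⟫_ℂ - s * t‖ := by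
        simpa using norm_sub_le (1 - s * t) (⟪z, w⟫_ℂ - s * t)
    _ ≤ _ := by linarith [Complex.norm_one_sub_mul_le (t := t) hs]

end

theorem stmt_11_general (N : ℕ)
    (d : EuclideanSpace ℂ (Fin N) → EuclideanSpace ℂ (Fin N) → ℝ)
    (hd : ∀ x y, d x y = Real.sqrt ‖(1 : ℂ) - (inner ℂ x y : ℂ)‖)
    (z w u : EuclideanSpace ℂ (Fin N))
    (hz : ‖z‖ ≤ 1) (hw : ‖w‖ ≤ 1) (hu : ‖u‖ ≤ 1) :
    d z w ≤ d z u + d u w := by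
  simpa only [hd] using sqrt_norm_one_sub_inner_le hz hw hu

/-- The non-isotropic pseudo-distance `d(z,w) = √|1-⟨z,w⟩|` satisfies the triangle
inequality on the closed unit ball of ℂ^N. -/
theorem stmt_11 (N : ℕ) (hN : 1 ≤ N)
    (d : EuclideanSpace ℂ (Fin N) → EuclideanSpace ℂ (Fin N) → ℝ)
    (hd : ∀ x y, d x y = Real.sqrt ‖(1 : ℂ) - (inner ℂ x y : ℂ)‖)
    (z w u : EuclideanSpace ℂ (Fin N))
    (hz : ‖z‖ ≤ 1) (hw : ‖w‖ ≤ 1) (hu : ‖u‖ ≤ 1) :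
    d z w ≤ d z u + d u w :=
  stmt_11_general N d hd z w u hz hw hu
end
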